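/- arXiv:1508.00316 — 6 statements merged into one kernel-verified Lean document; each statement's English description precedes it below -/
import Mathlib

section
/- Fix an integer n ≥ 1, a vector γ = (γ_1, …, γ_n) of positive integers, and an open subset V ⊆ ℂ^n containing the origin. Then the set Ũ = {(y_1, …, y_n, t) ∈ ℂ^n × ℂ : t ≠ 0 and (t^{γ_1}y_1, …, t^{γ_n}y_n) ∈ V} ∪ {(y_1, …, y_n, 0) ∈ ℂ^n × ℂ : y_i ≠ 0 for all i = 1, …, n} is an open subset of ℂ^{n+1} in the Euclidean topology. -/
open Set

/-- Fix `n ≥ 1`, positive integer weights `γ`, and an open `V ⊆ ℂⁿ`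
containing the origin. Then
`Ũ = {(y, t) : t ≠ 0 ∧ (t^{γ₁} y₁, …, t^{γₙ} yₙ) ∈ V} ∪ {(y, 0) : ∀ i, yᵢ ≠ 0}`
is open in `ℂⁿ × ℂ ≅ ℂ^{n+1}` (Euclidean topology). -/
theorem stmt1 (n : ℕ) (hn : 1 ≤ n) (γ : Fin n → ℕ) (hγ : ∀ i, 0 < γ i)
    (V : Set (Fin n → ℂ)) (hV : IsOpen V) (h0 : (0 : Fin n → ℂ) ∈ V) :
    IsOpen ({p : (Fin n → ℂ) × ℂ | p.2 ≠ 0 ∧ (fun i => p.2 ^ (γ i) * p.1 i) ∈ V} ∪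
      {p : (Fin n → ℂ) × ℂ | p.2 = 0 ∧ ∀ i, p.1 i ≠ 0}) := by
  have hg : Continuous (fun p : (Fin n → ℂ) × ℂ => fun i => p.2 ^ (γ i) * p.1 i) := by
    apply continuous_pi; intro i
    exact (continuous_snd.pow _).mul ((continuous_apply i).comp continuous_fst)
  rw [isOpen_iff_mem_nhds]
  rintro ⟨y, t⟩ (⟨ht, hVmem⟩ | ⟨ht, hy⟩)
  · have ho : IsOpen ({p : (Fin n → ℂ) × ℂ | p.2 ≠ 0} ∩
        {p | (fun i => p.2 ^ (γ i) * p.1 i) ∈ V}) :=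
      (isOpen_compl_singleton.preimage continuous_snd).inter (hV.preimage hg)
    exact Filter.mem_of_superset (ho.mem_nhds ⟨ht, hVmem⟩) fun q hq => Or.inl ⟨hq.1, hq.2⟩
  · have h1 : {p : (Fin n → ℂ) × ℂ | (fun i => p.2 ^ (γ i) * p.1 i) ∈ V} ∈ nhds (y, t) := by
      apply (hV.preimage hg).mem_nhds
      show (fun i => t ^ γ i * y i) ∈ V
      subst ht
      convert h0 using 1
      funext i
      simp [zero_pow (hγ i).ne']
    have h2 : {p : (Fin n → ℂ) × ℂ | ∀ i, p.1 i ≠ 0} ∈ nhds (y, t) := by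
      have ho : IsOpen {p : (Fin n → ℂ) × ℂ | ∀ i, p.1 i ≠ 0} := by
        have he : {p : (Fin n → ℂ) × ℂ | ∀ i, p.1 i ≠ 0} = ⋂ i, {p | p.1 i ≠ 0} := by
          ext; simp
        rw [he]
        exact isOpen_iInter_of_finite fun i =>
          isOpen_compl_singleton.preimage ((continuous_apply i).comp continuous_fst)
      exact ho.mem_nhds hy
    filter_upwards [h1, h2] with q hq1 hq2
    by_cases hq : q.2 = 0
    · exact Or.inr ⟨hq, hq2⟩
    · exact Or.inl ⟨hq, hq1⟩
end

section
/- Let n ≥ 1 and let c : ℕ^n → ℂ be a family of coefficients such that for some δ > 0 the family α ↦ |c_α| δ^{α_1 + ⋯ + α_n} (α ∈ ℕ^n) is summable. Let γ = (γ_1, …, γ_n) be a vector of positive integers and let β ∈ ℕ^n be such that γ·β ≤ γ·α for every α ∈ ℕ^n with c_α ≠ 0, where γ·α = ∑_{i=1}^n γ_i α_i. Then for every point ũ = (ũ_1, …, ũ_n) ∈ ℂ^n with ũ_i ≠ 0 for all i, there exists ε > 0 such that for all w ∈ ℂ^n with |w_i − ũ_i| < 1 for all i and all τ ∈ ℂ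 with |τ| < ε, the family α ↦ c_α · w_1^{α_1} ⋯ w_n^{α_n} · τ^{γ·α − γ·β}, indexed by those α ∈ ℕ^n with c_α ≠ 0 (so that the exponent γ·α − γ·β is a nonnegative integer), is absolutely summable. -/
open Finset

set_option maxHeartbeats 1000000 in
/-- Given coefficients `c : ℕⁿ → ℂ` whose power series converges
absolutely on a closed polydisc of radius `δ > 0`, positive integer weights `γ`,
and `β ∈ ℕⁿ` minimizing `γ·α` over the support of `c`, for every `ũ ∈ (ℂ*)ⁿ`
there is `ε > 0` such that for all `w` in the open unit polydisc around `ũ` and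
all `|τ| < ε` the family `α ↦ c_α w^α τ^{γ·α − γ·β}` (over the support of `c`)
is absolutely summable. -/
theorem stmt2 (n : ℕ) (hn : 1 ≤ n) (c : (Fin n → ℕ) → ℂ) (δ : ℝ) (hδ : 0 < δ)
    (hsum : Summable (fun α : Fin n → ℕ => ‖c α‖ * δ ^ (∑ i, α i)))
    (γ : Fin n → ℕ) (hγ : ∀ i, 0 < γ i) (β : Fin n → ℕ)
    (hβ : ∀ α : Fin n → ℕ, c α ≠ 0 → (∑ i, γ i * β i) ≤ (∑ i, γ i * α i))
    (u : Fin n → ℂ) (hu : ∀ i, u i ≠ 0) :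
    ∃ ε > 0, ∀ w : Fin n → ℂ, (∀ i, ‖w i - u i‖ < 1) → ∀ τ : ℂ, ‖τ‖ < ε →
      Summable (fun α : {α : Fin n → ℕ // c α ≠ 0} =>
        ‖c α.1 * (∏ i, w i ^ (α.1 i)) *
          τ ^ ((∑ i, γ i * α.1 i) - (∑ i, γ i * β i))‖) := by
  have hS : (0:ℝ) < 1 + ∑ i, ‖u i‖ := by positivity
  set S : ℝ := 1 + ∑ i, ‖u i‖ with hSdef
  set ε : ℝ := min 1 (δ / S) with hεdef
  have hε0 : 0 < ε := lt_min one_pos (div_pos hδ hS)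
  have hε1 : ε ≤ 1 := min_le_left _ _
  refine ⟨ε, hε0, ?_⟩
  intro w hw τ hτ
  have hwle : ∀ i, ‖w i‖ ≤ ‖u i‖ + 1 := by
    intro i
    calc ‖w i‖ = ‖u i + (w i - u i)‖ := by ring_nf
    _ ≤ ‖u i‖ + ‖w i - u i‖ := norm_add_le _ _
    _ ≤ ‖u i‖ + 1 := by linarith [hw i]
  -- key per-coordinate bound
  have hfac : ∀ i, (‖u i‖ + 1) * ε ^ γ i ≤ δ := by
    intro i
    have h1 : ε ^ γ i ≤ ε := pow_le_of_le_one hε0.le hε1 (hγ i).ne'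
    have h2 : ‖u i‖ + 1 ≤ S := by
      have : ‖u i‖ ≤ ∑ j, ‖u j‖ :=
        Finset.single_le_sum (fun j _ => norm_nonneg _) (mem_univ i)
      simp only [hSdef]; linarith
    have h3 : ε ≤ δ / S := min_le_right _ _
    calc (‖u i‖ + 1) * ε ^ γ i ≤ S * (δ / S) := by
          apply mul_le_mul h2 (h1.trans h3) (by positivity) hS.le
    _ = δ := by field_simp
  refine Summable.of_nonneg_of_le
    (f := fun α : {α : Fin n → ℕ // c α ≠ 0} =>
      (ε ^ (∑ i, γ i * β i))⁻¹ * (‖c α.1‖ * δ ^ (∑ i, α.1 i)))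
    (fun α => norm_nonneg _) ?_ ((hsum.subtype _).mul_left _)
  rintro ⟨α, hα⟩
  simp only []
  have hβα := hβ α hα
  have hτε : ‖τ‖ ≤ ε := hτ.le
  have key : (∏ i, (‖u i‖ + 1) ^ α i) * ε ^ (∑ i, γ i * α i) ≤ δ ^ (∑ i, α i) := by
    have h1 : ε ^ (∑ i, γ i * α i) = ∏ i, (ε ^ γ i) ^ α i := by
      rw [← Finset.prod_pow_eq_pow_sum]
      exact Finset.prod_congr rfl fun i _ => pow_mul ε (γ i) (α i)
    rw [h1, ← Finset.prod_mul_distrib, ← Finset.prod_pow_eq_pow_sum]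
    apply Finset.prod_le_prod
    · intro i _; positivity
    · intro i _
      rw [← mul_pow]
      exact pow_le_pow_left₀ (by positivity) (hfac i) _
  have hεβ : (0:ℝ) < ε ^ (∑ i, γ i * β i) := by positivity
  rw [inv_mul_eq_div, le_div_iff₀ hεβ]
  have hnorm : ‖c α * (∏ i, w i ^ (α i)) * τ ^ ((∑ i, γ i * α i) - (∑ i, γ i * β i))‖
      = ‖c α‖ * (∏ i, ‖w i‖ ^ (α i)) * ‖τ‖ ^ ((∑ i, γ i * α i) - (∑ i, γ i * β i)) := by
    simp [norm_mul, norm_prod, norm_pow]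
  rw [hnorm]
  calc ‖c α‖ * (∏ i, ‖w i‖ ^ (α i)) * ‖τ‖ ^ ((∑ i, γ i * α i) - (∑ i, γ i * β i))
        * ε ^ (∑ i, γ i * β i)
      ≤ ‖c α‖ * (∏ i, (‖u i‖ + 1) ^ (α i)) * ε ^ ((∑ i, γ i * α i) - (∑ i, γ i * β i))
        * ε ^ (∑ i, γ i * β i) := by
        gcongr with i hi
        all_goals first | exact hwle i | exact hτε | positivity
    _ = ‖c α‖ * ((∏ i, (‖u i‖ + 1) ^ (α i)) * ε ^ (∑ i, γ i * α i)) := by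
        rw [mul_assoc, mul_assoc, ← pow_add, Nat.sub_add_cancel hβα]
    _ ≤ ‖c α‖ * δ ^ (∑ i, α i) :=
        mul_le_mul_of_nonneg_left key (norm_nonneg _)
end

section
/- Let n ≥ 1 and let c : ℕ^n → ℂ be a family of coefficients such that for some δ > 0 the family α ↦ |c_α| δ^{α_1 + ⋯ + α_n} (α ∈ ℕ^n) is summable. Let γ = (γ_1, …, γ_n) be a vector of positive integers and let β ∈ ℕ^n be such that γ·β ≤ γ·α for every α ∈ ℕ^n with c_α ≠ 0, where γ·α = ∑_{i=1}^n γ_i α_i. Define f̃ : ℂ^n × ℂ → ℂ by f̃(w, τ) = ∑_{α ∈ ℕ^n, c_α ≠ 0} c_α · w_1^{α_1} ⋯ w_n^{α_n} · τ^{γ·α − γ·β} (the sum of the family where it is summable, and 0 otherwise). Then for every point ũ = (ũ_1, …, ũ_n) ∈ ℂ^n with ũ_i ≠ 0 for all i, the function f̃ is complex analytic at the point (ũ, 0) ∈ ℂ^{n+1}. -/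
/-!
Grouping the terms of `f̃` by total degree `|α| + (γ·α − γ·β)` exhibits it as a power series
converging on the ball of radius `min δ 1` about `0`. Since `γ·β ≤ γ·α` on the support of `c`,
`f̃` is weighted homogeneous: `f̃ (w, τ) = t ^ (γ·β) * f̃ (t ^ (-γ) w, t τ)` for `t ≠ 0`. For `t`
large the point `(t ^ (-γ) ũ, 0)` lies in the ball, and the identity carries analyticity there back
to `(ũ, 0)`.
-/

open Finset

noncomputable section

variable {𝕜 : Type*} [NontriviallyNormedField 𝕜] {n : ℕ}

abbrev MonomialIndex (α : Fin n → ℕ) (k : ℕ) := (Σ i : Fin n, Fin (α i)) ⊕ Fin k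

lemma card_monomialIndex (α : Fin n → ℕ) (k : ℕ) :
    Fintype.card (MonomialIndex α k) = ∑ i, α i + k := by
  simp

variable (𝕜) in
def monomialCoord (α : Fin n → ℕ) (k : ℕ) :
    MonomialIndex α k → ((Fin n → 𝕜) × 𝕜 →L[𝕜] 𝕜) :=
  Sum.elim (fun j => (ContinuousLinearMap.proj j.1).comp (ContinuousLinearMap.fst 𝕜 _ _))
    (fun _ => ContinuousLinearMap.snd 𝕜 _ _)

lemma norm_monomialCoord_le (α : Fin n → ℕ) (k : ℕ) (j : MonomialIndex α k) :
    ‖monomialCoord 𝕜 α k j‖ ≤ 1 := by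
  refine ContinuousLinearMap.opNorm_le_bound _ zero_le_one fun y => ?_
  rcases j with ⟨i, _⟩ | _
  · simpa [monomialCoord] using (norm_le_pi_norm y.1 i).trans (norm_fst_le y)
  · simpa [monomialCoord] using norm_snd_le y

/- The junk value `0` for `d ≠ |α| + k` lets `monomialSeries` sum over the monomials of degree `d`
without casting along `Fin (|α| + k) = Fin d`. -/
variable (𝕜) in
def monomialMap (α : Fin n → ℕ) (k d : ℕ) :
    ContinuousMultilinearMap 𝕜 (fun _ : Fin d => (Fin n → 𝕜) × 𝕜) 𝕜 :=
  if h : Fintype.card (MonomialIndex α k) = d then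
    (ContinuousMultilinearMap.mkPiAlgebra 𝕜 (Fin d) 𝕜).compContinuousLinearMap
      fun j => monomialCoord 𝕜 α k ((Fintype.equivFinOfCardEq h).symm j)
  else 0

lemma norm_monomialMap_le (α : Fin n → ℕ) (k d : ℕ) : ‖monomialMap 𝕜 α k d‖ ≤ 1 := by
  unfold monomialMap
  split_ifs
  · refine (ContinuousMultilinearMap.norm_compContinuousLinearMap_le _ _).trans ?_
    rw [ContinuousMultilinearMap.norm_mkPiAlgebra, one_mul]
    exact prod_le_one (fun _ _ => norm_nonneg _) fun _ _ => norm_monomialCoord_le _ _ _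
  · simp

lemma monomialMap_apply_diag {α : Fin n → ℕ} {k d : ℕ} (h : ∑ i, α i + k = d)
    (y : (Fin n → 𝕜) × 𝕜) :
    monomialMap 𝕜 α k d (fun _ => y) = (∏ i, y.1 i ^ α i) * y.2 ^ k := by
  rw [monomialMap, dif_pos ((card_monomialIndex α k).trans h)]
  simp only [ContinuousMultilinearMap.compContinuousLinearMap_apply,
    ContinuousMultilinearMap.mkPiAlgebra_apply]
  rw [Equiv.prod_comp (Fintype.equivFinOfCardEq _).symm fun j => monomialCoord 𝕜 α k j y,
    Fintype.prod_sum_type, ← univ_sigma_univ, prod_sigma]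
  simp [monomialCoord]

lemma pow_add_le_pow_of_le_one {r δ : ℝ} (hr : 0 ≤ r) (hrδ : r ≤ δ) (hr1 : r ≤ 1) (a b : ℕ) :
    r ^ (a + b) ≤ δ ^ a := by
  rw [pow_add]
  exact (mul_le_of_le_one_right (pow_nonneg hr _) (pow_le_one₀ hr hr1)).trans
    (pow_le_pow_left₀ hr hrδ a)

section MonomialSeries

variable (k : (Fin n → ℕ) → ℕ)

def monomialsOfDegree (d : ℕ) : Finset (Fin n → ℕ) :=
  {α ∈ Fintype.piFinset fun _ => range (d + 1) | ∑ i, α i + k α = d}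

lemma mem_monomialsOfDegree {d : ℕ} {α : Fin n → ℕ} :
    α ∈ monomialsOfDegree k d ↔ ∑ i, α i + k α = d := by
  refine mem_filter.trans (and_iff_right_of_imp fun hd => Fintype.mem_piFinset.2 fun i => ?_)
  rw [mem_range, Nat.lt_succ_iff, ← hd]
  exact (single_le_sum (fun j _ => Nat.zero_le (α j)) (mem_univ i)).trans (Nat.le_add_right _ _)

lemma HasSum.sum_monomialsOfDegree {M : Type*} [AddCommMonoid M] [TopologicalSpace M]
    [ContinuousAdd M] [RegularSpace M] {a : (Fin n → ℕ) → M} {s : M} (h : HasSum a s) :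
    HasSum (fun d => ∑ α ∈ monomialsOfDegree k d, a α) s :=
  ((Equiv.sigmaFiberEquiv fun α => ∑ i, α i + k α).hasSum_iff.mpr h).sigma fun d =>
    (Equiv.subtypeEquivRight fun _ => mem_monomialsOfDegree k).hasSum_iff.mp
      ((monomialsOfDegree k d).hasSum a)

variable (c : (Fin n → ℕ) → 𝕜)

def monomialSeries : FormalMultilinearSeries 𝕜 ((Fin n → 𝕜) × 𝕜) 𝕜 := fun d =>
  ∑ α ∈ monomialsOfDegree k d, c α • monomialMap 𝕜 α (k α) d

lemma norm_monomialSeries_le (d : ℕ) :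
    ‖monomialSeries k c d‖ ≤ ∑ α ∈ monomialsOfDegree k d, ‖c α‖ :=
  (norm_sum_le _ _).trans <| sum_le_sum fun _ _ =>
    (ContinuousMultilinearMap.opNorm_smul_le _ _).trans
      (mul_le_of_le_one_right (norm_nonneg _) (norm_monomialMap_le _ _ _))

lemma monomialSeries_apply_diag (d : ℕ) (y : (Fin n → 𝕜) × 𝕜) :
    monomialSeries k c d (fun _ => y) =
      ∑ α ∈ monomialsOfDegree k d, c α * (∏ i, y.1 i ^ α i) * y.2 ^ k α := by
  simp only [monomialSeries, _root_.sum_apply, smul_apply, smul_eq_mul, mul_assoc]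
  exact sum_congr rfl fun α hα => by
    rw [monomialMap_apply_diag ((mem_monomialsOfDegree k).1 hα)]

theorem hasFPowerSeriesOnBall_tsum_monomial [CompleteSpace 𝕜] {δ : ℝ} (hδ : 0 < δ)
    (hsum : Summable fun α : Fin n → ℕ => ‖c α‖ * δ ^ ∑ i, α i) :
    HasFPowerSeriesOnBall (fun y => ∑' α, c α * (∏ i, y.1 i ^ α i) * y.2 ^ k α)
      (monomialSeries k c) 0 (ENNReal.ofReal (min δ 1)) := by
  set r := min δ 1
  have hr : 0 < r := lt_min hδ one_pos
  have hdom : ∀ {s : ℝ}, 0 ≤ s → s ≤ r → ∀ α : Fin n → ℕ,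
      ‖c α‖ * s ^ (∑ i, α i + k α) ≤ ‖c α‖ * δ ^ ∑ i, α i := fun hs hsr α =>
    mul_le_mul_of_nonneg_left (pow_add_le_pow_of_le_one hs (hsr.trans (min_le_left _ _))
      (hsr.trans (min_le_right _ _)) _ _) (norm_nonneg _)
  have hbound := (hsum.hasSum.sum_monomialsOfDegree k).summable
  refine ⟨?_, ENNReal.ofReal_pos.2 hr, fun {y} hy => ?_⟩
  · have hS : Summable fun d => ‖monomialSeries k c d‖ * r ^ d := by
      refine hbound.of_nonneg_of_le (fun d => by positivity) fun d => ?_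
      calc ‖monomialSeries k c d‖ * r ^ d
          ≤ (∑ α ∈ monomialsOfDegree k d, ‖c α‖) * r ^ d := by
            gcongr; exact norm_monomialSeries_le k c d
        _ = ∑ α ∈ monomialsOfDegree k d, ‖c α‖ * r ^ (∑ i, α i + k α) := by
            rw [sum_mul]
            exact sum_congr rfl fun α hα => by rw [(mem_monomialsOfDegree k).1 hα]
        _ ≤ _ := sum_le_sum fun α _ => hdom hr.le le_rfl α
    simpa [ENNReal.ofReal, Real.coe_toNNReal r hr.le] using
      (monomialSeries k c).le_radius_of_summable (r := r.toNNReal)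
        (by simpa [Real.coe_toNNReal r hr.le] using hS)
  · have hy : ‖y‖ < r := by simpa [Metric.mem_eball, edist_zero_right, ← ofReal_norm,
      ENNReal.ofReal_lt_ofReal_iff hr] using hy
    have hterm : ∀ α : Fin n → ℕ, ‖c α * (∏ i, y.1 i ^ α i) * y.2 ^ k α‖ ≤
        ‖c α‖ * δ ^ ∑ i, α i := fun α => by
      refine le_trans ?_ (hdom (norm_nonneg y) hy.le α)
      rw [mul_assoc, norm_mul, ← monomialMap_apply_diag rfl]
      gcongr
      simpa using (monomialMap 𝕜 α (k α) _).le_of_opNorm_le (norm_monomialMap_le _ _ _)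
        fun _ => y
    simpa [zero_add, monomialSeries_apply_diag] using
      ((hsum.of_norm_bounded hterm).hasSum).sum_monomialsOfDegree k

end MonomialSeries

lemma prod_weighted_pow_mul_pow {R : Type*} [CommSemiring R] (t τ : R) (w : Fin n → R)
    {γ α : Fin n → ℕ} {m : ℕ} (hm : m ≤ ∑ i, γ i * α i) :
    (∏ i, (t ^ γ i * w i) ^ α i) * τ ^ ((∑ i, γ i * α i) - m) =
      t ^ m * ((∏ i, w i ^ α i) * (t * τ) ^ ((∑ i, γ i * α i) - m)) := by
  have hweight : ∏ i, (t ^ γ i * w i) ^ α i = t ^ (∑ i, γ i * α i) * ∏ i, w i ^ α i := by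
    simp only [mul_pow, prod_mul_distrib, ← pow_mul, prod_pow_eq_pow_sum]
  obtain ⟨j, hj⟩ := Nat.exists_eq_add_of_le hm
  rw [hweight, hj, Nat.add_sub_cancel_left]
  ring

variable (c : (Fin n → ℕ) → 𝕜) (γ β : Fin n → ℕ)

def weightedRescaling (t : 𝕜) : (Fin n → 𝕜) × 𝕜 →L[𝕜] (Fin n → 𝕜) × 𝕜 :=
  (ContinuousLinearMap.pi fun i => (t ^ γ i)⁻¹ • ContinuousLinearMap.proj (R := 𝕜) i).prodMap
    (t • ContinuousLinearMap.id 𝕜 𝕜)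

@[simp]
lemma weightedRescaling_apply (t : 𝕜) (p : (Fin n → 𝕜) × 𝕜) :
    weightedRescaling γ t p = (fun i => (t ^ γ i)⁻¹ * p.1 i, t * p.2) :=
  rfl

def weightedSeries (p : (Fin n → 𝕜) × 𝕜) : 𝕜 :=
  ∑' α : {α : Fin n → ℕ // c α ≠ 0},
    c α.1 * (∏ i, p.1 i ^ (α.1 i)) * p.2 ^ ((∑ i, γ i * α.1 i) - (∑ i, γ i * β i))

lemma weightedSeries_eq_tsum (p : (Fin n → 𝕜) × 𝕜) :
    weightedSeries c γ β p =
      ∑' α, c α * (∏ i, p.1 i ^ α i) * p.2 ^ ((∑ i, γ i * α i) - (∑ i, γ i * β i)) := by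
  rw [← tsum_subtype_eq_of_support_subset (s := {α | c α ≠ 0})]
  · rfl
  · exact fun α hα h0 => hα (by simp [h0])

lemma weightedSeries_eq_pow_mul_weightedRescaling
    (hβ : ∀ α, c α ≠ 0 → (∑ i, γ i * β i) ≤ (∑ i, γ i * α i)) {t : 𝕜} (ht : t ≠ 0)
    (p : (Fin n → 𝕜) × 𝕜) :
    weightedSeries c γ β p =
      t ^ (∑ i, γ i * β i) * weightedSeries c γ β (weightedRescaling γ t p) := by
  rw [weightedRescaling_apply, weightedSeries, weightedSeries, ← tsum_mul_left]
  refine tsum_congr fun α => ?_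
  conv_lhs => rw [← funext fun i => mul_inv_cancel_left₀ (pow_ne_zero (γ i) ht) (p.1 i)]
  rw [mul_assoc, prod_weighted_pow_mul_pow _ _ _ (hβ α.1 α.2)]
  ring

theorem hasFPowerSeriesOnBall_weightedSeries [CompleteSpace 𝕜] {δ : ℝ} (hδ : 0 < δ)
    (hsum : Summable fun α : Fin n → ℕ => ‖c α‖ * δ ^ ∑ i, α i) :
    HasFPowerSeriesOnBall (weightedSeries c γ β)
      (monomialSeries (fun α => (∑ i, γ i * α i) - ∑ i, γ i * β i) c) 0
      (ENNReal.ofReal (min δ 1)) := by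
  rw [funext (weightedSeries_eq_tsum c γ β)]
  exact hasFPowerSeriesOnBall_tsum_monomial _ c hδ hsum

end

theorem stmt3_general (n : ℕ) (c : (Fin n → ℕ) → ℂ) (δ : ℝ) (hδ : 0 < δ)
    (hsum : Summable (fun α : Fin n → ℕ => ‖c α‖ * δ ^ (∑ i, α i)))
    (γ : Fin n → ℕ) (hγ : ∀ i, 0 < γ i) (β : Fin n → ℕ)
    (hβ : ∀ α : Fin n → ℕ, c α ≠ 0 → (∑ i, γ i * β i) ≤ (∑ i, γ i * α i))
    (f : (Fin n → ℂ) × ℂ → ℂ)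
    (hf : ∀ p : (Fin n → ℂ) × ℂ,
      f p = ∑' α : {α : Fin n → ℕ // c α ≠ 0},
        c α.1 * (∏ i, p.1 i ^ (α.1 i)) *
          p.2 ^ ((∑ i, γ i * α.1 i) - (∑ i, γ i * β i)))
    (u : Fin n → ℂ) :
    AnalyticAt ℂ f (u, 0) := by
  obtain rfl : f = weightedSeries c γ β := funext hf
  have hr : 0 < min δ 1 := lt_min hδ one_pos
  have hball := hasFPowerSeriesOnBall_weightedSeries c γ β hδ hsum
  obtain ⟨t, ht, htu⟩ : ∃ t : ℝ, 0 < t ∧ ∀ i, ‖u i‖ / t ^ γ i < min δ 1 := by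
    have hsmall : ∀ i, ∀ᶠ t : ℝ in Filter.atTop, ‖u i‖ / t ^ γ i < min δ 1 := fun i =>
      (tendsto_const_nhds.div_atTop (Filter.tendsto_pow_atTop (hγ i).ne')).eventually
        (gt_mem_nhds hr)
    exact ((Filter.eventually_gt_atTop 0).and (Filter.eventually_all.2 hsmall)).exists
  have hmem : weightedRescaling γ (t : ℂ) (u, 0) ∈ Metric.eball 0 (ENNReal.ofReal (min δ 1)) := by
    rw [Metric.mem_eball, edist_zero_right, ← ofReal_norm, ENNReal.ofReal_lt_ofReal_iff hr,
      weightedRescaling_apply, mul_zero, Prod.norm_mk, norm_zero, max_lt_iff]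
    refine ⟨(pi_norm_lt_iff hr).2 fun i => ?_, hr⟩
    simpa [div_eq_inv_mul, abs_of_pos ht] using htu i
  have hscaled : AnalyticAt ℂ (fun p => (t : ℂ) ^ (∑ i, γ i * β i) *
      weightedSeries c γ β (weightedRescaling γ (t : ℂ) p)) (u, 0) :=
    analyticAt_const.mul
      ((hball.analyticAt_of_mem hmem).comp ((weightedRescaling γ (t : ℂ)).analyticAt _))
  exact hscaled.congr (Filter.Eventually.of_forall fun p =>
    (weightedSeries_eq_pow_mul_weightedRescaling c γ β hβ (by exact_mod_cast ht.ne') p).symm)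

/-- With hypotheses as in Statement 2, the function
`f̃(w, τ) = ∑_{α, c_α ≠ 0} c_α w^α τ^{γ·α − γ·β}` (a `tsum`, which equals the sum
of the family where it is summable and `0` otherwise) is complex analytic at
every point `(ũ, 0)` with all coordinates of `ũ` nonzero. -/
theorem stmt3 (n : ℕ) (hn : 1 ≤ n) (c : (Fin n → ℕ) → ℂ) (δ : ℝ) (hδ : 0 < δ)
    (hsum : Summable (fun α : Fin n → ℕ => ‖c α‖ * δ ^ (∑ i, α i)))
    (γ : Fin n → ℕ) (hγ : ∀ i, 0 < γ i) (β : Fin n → ℕ)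
    (hβ : ∀ α : Fin n → ℕ, c α ≠ 0 → (∑ i, γ i * β i) ≤ (∑ i, γ i * α i))
    (f : (Fin n → ℂ) × ℂ → ℂ)
    (hf : ∀ p : (Fin n → ℂ) × ℂ,
      f p = ∑' α : {α : Fin n → ℕ // c α ≠ 0},
        c α.1 * (∏ i, p.1 i ^ (α.1 i)) *
          p.2 ^ ((∑ i, γ i * α.1 i) - (∑ i, γ i * β i)))
    (u : Fin n → ℂ) (hu : ∀ i, u i ≠ 0) :
    AnalyticAt ℂ f (u, 0) :=
  stmt3_general n c δ hδ hsum γ hγ β hβ f hf u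
end

section
/- Fix n ≥ 1. Let (A_k)_{k≥1} be a family of nonempty finite subsets of ℤ^n satisfying the superadditivity condition A_k + A_m ⊆ A_{k+m} for all k, m ≥ 1, and assume there is a constant C > 0 such that A_k ⊆ [−Ck, Ck]^n for all k ≥ 1. For k ≥ 1 let Δ_k = (1/k)·conv(A_k) ⊆ ℝ^n and let Δ = closure(conv(⋃_{k≥1} Δ_k)). Then for every ε > 0 there exists N > 0 such that for every k > N the Lebesgue measure of Δ \ Δ_k is less than ε. -/
open Set MeasureTheory Pointwise

/-- `Δ_k = (1/k) · conv(A_k)`, the `k`-th rescaled convex hull inside `ℝⁿ`,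
where `A_k ⊆ ℤⁿ` is regarded as a subset of `ℝⁿ`. -/
def DeltaK (n : ℕ) (A : ℕ → Finset (Fin n → ℤ)) (k : ℕ) : Set (Fin n → ℝ) :=
  ((k : ℝ)⁻¹) • convexHull ℝ ((fun a : Fin n → ℤ => fun i => (a i : ℝ)) '' ↑(A k))

/-- `Δ = closure(conv(⋃_{k ≥ 1} Δ_k))`. -/
def DeltaLimit (n : ℕ) (A : ℕ → Finset (Fin n → ℤ)) : Set (Fin n → ℝ) :=
  closure (convexHull ℝ (⋃ k ∈ {k : ℕ | 1 ≤ k}, DeltaK n A k))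

/-!
Superadditivity gives `Δ_m ⊆ Δ_{qm}`, so the `Δ_k` form a directed family of convex sets and
their union is convex. Its closure `Δ` differs from it by a piece of its frontier, which is null,
so `vol Δ = sup_k vol Δ_k`. Writing `k = qm + r` with `1 ≤ r ≤ m`, superadditivity also puts
a translate of `(qm/k) • Δ_m` inside `Δ_k`, whence `vol Δ_k ≥ (1 - m/k)ⁿ vol Δ_m`; letting
`k → ∞` and then `m` vary gives `vol Δ_k → vol Δ`. The box bound makes `vol Δ` finite, so
`vol (Δ \ Δ_k) = vol Δ - vol Δ_k → 0`.
-/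

open Filter Topology

def IsSuperadditive {n : ℕ} (A : ℕ → Finset (Fin n → ℤ)) : Prop :=
  ∀ k m, 1 ≤ k → 1 ≤ m → ∀ a ∈ A k, ∀ b ∈ A m, a + b ∈ A (k + m)

def latticeHull {n : ℕ} (A : ℕ → Finset (Fin n → ℤ)) (k : ℕ) : Set (Fin n → ℝ) :=
  convexHull ℝ ((fun a : Fin n → ℤ => fun i => (a i : ℝ)) '' ↑(A k))

section

variable {n : ℕ} {A : ℕ → Finset (Fin n → ℤ)} {k m : ℕ}

lemma deltaK_eq_smul_latticeHull (k : ℕ) : DeltaK n A k = (k : ℝ)⁻¹ • latticeHull A k :=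
  rfl

lemma convex_latticeHull : Convex ℝ (latticeHull A k) := convex_convexHull ℝ _

lemma IsSuperadditive.latticeHull_add_subset (hA : IsSuperadditive A) (hk : 1 ≤ k)
    (hm : 1 ≤ m) : latticeHull A k + latticeHull A m ⊆ latticeHull A (k + m) := by
  rw [latticeHull, latticeHull, ← convexHull_add]
  refine convexHull_mono ?_
  rintro _ ⟨_, ⟨a, ha, rfl⟩, _, ⟨b, hb, rfl⟩, rfl⟩
  exact ⟨a + b, hA k m hk hm a ha b hb, by ext; simp⟩

lemma IsSuperadditive.natCast_smul_latticeHull_subset (hA : IsSuperadditive A) (hm : 1 ≤ m)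
    {q : ℕ} (hq : 1 ≤ q) : (q : ℝ) • latticeHull A m ⊆ latticeHull A (q * m) := by
  induction q, hq using Nat.le_induction with
  | base => simp
  | succ q hq ih =>
    calc ((q + 1 : ℕ) : ℝ) • latticeHull A m
          = (q : ℝ) • latticeHull A m + latticeHull A m := by
          push_cast
          rw [convex_latticeHull.add_smul q.cast_nonneg zero_le_one, one_smul]
      _ ⊆ latticeHull A (q * m) + latticeHull A m := add_subset_add_right ih
      _ ⊆ latticeHull A ((q + 1) * m) := by
          rw [add_one_mul]
          exact hA.latticeHull_add_subset (Nat.mul_pos hq hm) hm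

lemma IsSuperadditive.deltaK_subset_deltaK_mul (hA : IsSuperadditive A) (hm : 1 ≤ m)
    {q : ℕ} (hq : 1 ≤ q) : DeltaK n A m ⊆ DeltaK n A (q * m) := by
  have hq0 : (q : ℝ) ≠ 0 := by positivity
  calc DeltaK n A m = ((q * m : ℕ) : ℝ)⁻¹ • ((q : ℝ) • latticeHull A m) := by
        rw [smul_smul, deltaK_eq_smul_latticeHull]
        congr 1
        push_cast
        field_simp
    _ ⊆ DeltaK n A (q * m) := smul_set_mono (hA.natCast_smul_latticeHull_subset hm hq)

lemma IsSuperadditive.smul_deltaK_add_smul_deltaK_subset (hA : IsSuperadditive A) (hk : 1 ≤ k)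
    (hm : 1 ≤ m) :
    ((k : ℝ) / (k + m : ℕ)) • DeltaK n A k + ((m : ℝ) / (k + m : ℕ)) • DeltaK n A m ⊆
      DeltaK n A (k + m) := by
  have hcancel : ∀ j : ℕ, 1 ≤ j → ((j : ℝ) / (k + m : ℕ)) • DeltaK n A j =
      ((k + m : ℕ) : ℝ)⁻¹ • latticeHull A j := fun j hj => by
    have : (j : ℝ) ≠ 0 := by positivity
    rw [deltaK_eq_smul_latticeHull, smul_smul]
    congr 1
    field_simp
  rw [hcancel k hk, hcancel m hm, ← smul_add]
  exact smul_set_mono (hA.latticeHull_add_subset hk hm)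

lemma deltaK_nonempty (h : (A k).Nonempty) : (DeltaK n A k).Nonempty :=
  (convexHull_nonempty_iff.2 ((Finset.coe_nonempty.2 h).image _)).smul_set

lemma exists_mul_add_eq_of_lt (hm : 1 ≤ m) (hmk : m < k) :
    ∃ q r, 1 ≤ q ∧ 1 ≤ r ∧ r ≤ m ∧ q * m + r = k := by
  have hdiv := Nat.div_add_mod (k - 1) m
  have hmod := Nat.mod_lt (k - 1) hm
  refine ⟨(k - 1) / m, (k - 1) % m + 1, (Nat.one_le_div_iff hm).2 (by omega), by omega,
    by omega, ?_⟩
  rw [Nat.mul_comm]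
  omega

lemma IsSuperadditive.ofReal_pow_mul_volume_deltaK_le (hA : IsSuperadditive A)
    (hne : ∀ k, 1 ≤ k → (A k).Nonempty) (hm : 1 ≤ m) (hmk : m < k) :
    ENNReal.ofReal ((1 - m / k) ^ n) * volume (DeltaK n A m) ≤ volume (DeltaK n A k) := by
  obtain ⟨q, r, hq, hr, hrm, rfl⟩ := exists_mul_add_eq_of_lt hm hmk
  obtain ⟨y, hy⟩ := deltaK_nonempty (hne r hr)
  set t : ℝ := ((q * m : ℕ) : ℝ) / (q * m + r : ℕ)
  have hk : (0 : ℝ) < (q * m + r : ℕ) := by positivity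
  have ht : 1 - (m : ℝ) / (q * m + r : ℕ) ≤ t := by
    have : t = 1 - (r : ℝ) / (q * m + r : ℕ) := by
      simp only [t]
      field_simp
      push_cast
      ring
    rw [this]
    gcongr
  have hincl :
      ((r : ℝ) / (q * m + r : ℕ)) • y +ᵥ t • DeltaK n A m ⊆ DeltaK n A (q * m + r) := by
    rintro _ ⟨_, ⟨x, hx, rfl⟩, rfl⟩
    show ((r : ℝ) / (q * m + r : ℕ)) • y + t • x ∈ _
    rw [add_comm _ (t • x)]
    exact hA.smul_deltaK_add_smul_deltaK_subset (Nat.mul_pos hq hm) hr <|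
      add_mem_add (smul_mem_smul_set (hA.deltaK_subset_deltaK_mul hm hq hx))
        (smul_mem_smul_set hy)
  calc ENNReal.ofReal ((1 - m / (q * m + r : ℕ)) ^ n) * volume (DeltaK n A m)
      ≤ ENNReal.ofReal (t ^ n) * volume (DeltaK n A m) := by
        gcongr
        exact sub_nonneg.2 ((div_le_one hk).2 (mod_cast hmk.le))
    _ = volume (t • DeltaK n A m) := by
        rw [Measure.addHaar_smul_of_nonneg _ (by positivity), Module.finrank_fin_fun]
    _ = volume (((r : ℝ) / (q * m + r : ℕ)) • y +ᵥ t • DeltaK n A m) :=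
        (measure_vadd _ _ _).symm
    _ ≤ volume (DeltaK n A (q * m + r)) := measure_mono hincl

lemma convex_deltaK (k : ℕ) : Convex ℝ (DeltaK n A k) := convex_latticeHull.smul _

lemma deltaK_subset_deltaLimit (hk : 1 ≤ k) : DeltaK n A k ⊆ DeltaLimit n A :=
  (subset_biUnion_of_mem (u := DeltaK n A) hk).trans
    ((subset_convexHull ℝ _).trans subset_closure)

lemma IsSuperadditive.directedOn_deltaK (hA : IsSuperadditive A) :
    DirectedOn (fun a b => DeltaK n A a ⊆ DeltaK n A b) {k : ℕ | 1 ≤ k} := by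
  intro a ha b hb
  refine ⟨b * a, Nat.mul_pos hb ha, hA.deltaK_subset_deltaK_mul ha hb, ?_⟩
  rw [mul_comm]
  exact hA.deltaK_subset_deltaK_mul hb ha

lemma IsSuperadditive.convex_biUnion_deltaK (hA : IsSuperadditive A) :
    Convex ℝ (⋃ k ∈ {k : ℕ | 1 ≤ k}, DeltaK n A k) := by
  intro x hx y hy a b ha hb hab
  simp only [mem_iUnion₂] at hx hy ⊢
  obtain ⟨i, hi, hx⟩ := hx
  obtain ⟨j, hj, hy⟩ := hy
  obtain ⟨k, hk, hik, hjk⟩ := hA.directedOn_deltaK i hi j hj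
  exact ⟨k, hk, convex_deltaK k (hik hx) (hjk hy) ha hb hab⟩

lemma IsSuperadditive.volume_deltaLimit (hA : IsSuperadditive A) :
    volume (DeltaLimit n A) = ⨆ k ∈ {k : ℕ | 1 ≤ k}, volume (DeltaK n A k) := by
  rw [DeltaLimit, hA.convex_biUnion_deltaK.convexHull_eq,
    measure_closure_of_null_frontier (hA.convex_biUnion_deltaK.addHaar_frontier volume),
    measure_biUnion_eq_iSup (to_countable _) hA.directedOn_deltaK]

lemma deltaK_subset_pi_Icc {C : ℝ} (hk : 1 ≤ k)
    (hbound : ∀ a ∈ A k, ∀ i, |(a i : ℝ)| ≤ C * k) :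
    DeltaK n A k ⊆ univ.pi fun _ => Icc (-C) C := by
  rw [DeltaK, ← convexHull_smul]
  refine convexHull_min ?_ (convex_pi fun _ _ => convex_Icc _ _)
  rintro _ ⟨_, ⟨a, ha, rfl⟩, rfl⟩ i -
  rw [mem_Icc, ← abs_le]
  have hk' : (0 : ℝ) < k := by exact_mod_cast hk
  simp only [Pi.smul_apply, smul_eq_mul, abs_mul, abs_inv, Nat.abs_cast]
  rw [inv_mul_le_iff₀ hk', mul_comm]
  exact hbound a ha i

lemma volume_deltaLimit_lt_top {C : ℝ}
    (hbound : ∀ k, 1 ≤ k → ∀ a ∈ A k, ∀ i, |(a i : ℝ)| ≤ C * k) :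
    volume (DeltaLimit n A) < ⊤ := by
  have hsub : DeltaLimit n A ⊆ univ.pi fun _ => Icc (-C) C :=
    closure_minimal
      (convexHull_min (iUnion₂_subset fun k hk => deltaK_subset_pi_Icc hk (hbound k hk))
        (convex_pi fun _ _ => convex_Icc _ _))
      (isClosed_set_pi fun _ _ => isClosed_Icc)
  exact (measure_mono hsub).trans_lt (isCompact_univ_pi fun _ => isCompact_Icc).measure_lt_top

lemma IsSuperadditive.tendsto_volume_deltaK (hA : IsSuperadditive A)
    (hne : ∀ k, 1 ≤ k → (A k).Nonempty) :
    Tendsto (fun k => volume (DeltaK n A k)) atTop (𝓝 (volume (DeltaLimit n A))) := by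
  refine tendsto_order.2 ⟨fun b hb => ?_, fun b hb => ?_⟩
  · rw [hA.volume_deltaLimit, lt_biSup_iff] at hb
    obtain ⟨m, hm, hbm⟩ := hb
    have hshrink : Tendsto (fun k : ℕ => (1 - m / k : ℝ) ^ n) atTop (𝓝 1) := by
      simpa using ((tendsto_const_div_atTop_nhds_zero_nat (m : ℝ)).const_sub 1).pow n
    have hlim : Tendsto (fun k : ℕ => ENNReal.ofReal ((1 - m / k) ^ n) * volume (DeltaK n A m))
        atTop (𝓝 (volume (DeltaK n A m))) := by
      simpa using ENNReal.Tendsto.mul_const (ENNReal.tendsto_ofReal hshrink) (Or.inl (by simp))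
    filter_upwards [hlim.eventually (lt_mem_nhds hbm), eventually_gt_atTop m] with k hk hmk
    exact hk.trans_le (hA.ofReal_pow_mul_volume_deltaK_le hne hm hmk)
  · filter_upwards [eventually_ge_atTop 1] with k hk
    exact (measure_mono (deltaK_subset_deltaLimit hk)).trans_lt hb

lemma IsSuperadditive.tendsto_volume_deltaLimit_sdiff_deltaK (hA : IsSuperadditive A)
    (hne : ∀ k, 1 ≤ k → (A k).Nonempty) {C : ℝ}
    (hbound : ∀ k, 1 ≤ k → ∀ a ∈ A k, ∀ i, |(a i : ℝ)| ≤ C * k) :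
    Tendsto (fun k => volume (DeltaLimit n A \ DeltaK n A k)) atTop (𝓝 0) := by
  have hfin := (volume_deltaLimit_lt_top hbound).ne
  have hsub := ENNReal.Tendsto.sub tendsto_const_nhds (hA.tendsto_volume_deltaK hne) (Or.inl hfin)
  rw [tsub_self] at hsub
  refine hsub.congr' ?_
  filter_upwards [eventually_ge_atTop 1] with k hk
  exact (measure_sdiff (deltaK_subset_deltaLimit hk) ((convex_deltaK k).nullMeasurableSet volume)
    (ne_top_of_le_ne_top hfin (measure_mono (deltaK_subset_deltaLimit hk)))).symm

end

theorem stmt6_general (n : ℕ) (A : ℕ → Finset (Fin n → ℤ))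
    (hne : ∀ k, 1 ≤ k → (A k).Nonempty)
    (hadd : ∀ k m, 1 ≤ k → 1 ≤ m → ∀ a ∈ A k, ∀ b ∈ A m, a + b ∈ A (k + m))
    (C : ℝ)
    (hbound : ∀ k, 1 ≤ k → ∀ a ∈ A k, ∀ i, |(a i : ℝ)| ≤ C * k) :
    ∀ ε : ℝ, 0 < ε → ∃ N : ℕ, ∀ k, N < k →
      volume (DeltaLimit n A \ DeltaK n A k) < ENNReal.ofReal ε := by
  intro ε hε
  have hA : IsSuperadditive A := hadd
  obtain ⟨N, hN⟩ := eventually_atTop.1 <|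
    (hA.tendsto_volume_deltaLimit_sdiff_deltaK hne hbound).eventually
      (gt_mem_nhds (ENNReal.ofReal_pos.2 hε))
  exact ⟨N, fun k hk => hN k hk.le⟩

/-- For a superadditive family `(A_k)_{k ≥ 1}` of nonempty finite
subsets of `ℤⁿ` with `A_k ⊆ [−Ck, Ck]ⁿ`, the rescaled hulls `Δ_k = (1/k)conv(A_k)`
exhaust `Δ = closure(conv(⋃_k Δ_k))` in measure: for every `ε > 0` there is `N`
such that for all `k > N`, `vol(Δ \ Δ_k) < ε`. -/
theorem stmt6 (n : ℕ) (hn : 1 ≤ n) (A : ℕ → Finset (Fin n → ℤ))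
    (hne : ∀ k, 1 ≤ k → (A k).Nonempty)
    (hadd : ∀ k m, 1 ≤ k → 1 ≤ m → ∀ a ∈ A k, ∀ b ∈ A m, a + b ∈ A (k + m))
    (C : ℝ) (hC : 0 < C)
    (hbound : ∀ k, 1 ≤ k → ∀ a ∈ A k, ∀ i, |(a i : ℝ)| ≤ C * k) :
    ∀ ε : ℝ, 0 < ε → ∃ N : ℕ, ∀ k, N < k →
      volume (DeltaLimit n A \ DeltaK n A k) < ENNReal.ofReal ε :=
  stmt6_general n A hne hadd C hbound
end

section
/- Let n ≥ 1 and d ≥ 1 be integers. In ℝ^n with standard basis e_1, …, e_n, let Δ = conv{0, e_1, …, e_{n−1}, d·e_n} and, for i = 1, …, d, let Δ_i = conv{e_1, …, e_{n−1}, (i−1)·e_n, i·e_n}. Then Δ = Δ_1 ∪ Δ_2 ∪ ⋯ ∪ Δ_d. -/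
/-! With `S = {e_1, …, e_{n−1}}` and `I` a segment, `conv (I ∪ S)` is the union of the
simplices `conv (insert p S)` over `p ∈ I`, because any convex combination can gather its
`I`-part into a single point of `I`. Hence `Δ` is the union of `conv (insert p S)` over
`p ∈ [0, d·e_n]`, and each `Δ_i` is the same union over `p ∈ [(i−1)·e_n, i·e_n]`; these unit
segments cover `[0, d·e_n]`. -/

/-- The first `n−1` standard basis vectors `e_1, …, e_{n−1}` of `ℝⁿ`. -/
def smallBasis (n : ℕ) : Set (Fin n → ℝ) :=
  {v | ∃ i : Fin n, (i : ℕ) + 1 < n ∧ v = Pi.single i 1}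

/-- The last index of `Fin n` (for `n ≥ 1`), so `e_n = (Pi.single (lastIdx n hn) 1 : Fin n → ℝ)`. -/
def lastIdx (n : ℕ) (hn : 1 ≤ n) : Fin n := ⟨n - 1, by omega⟩

/-- The simplex `Δ = conv{0, e_1, …, e_{n−1}, d·e_n}` in `ℝⁿ`. -/
def bigSimplex (n : ℕ) (hn : 1 ≤ n) (d : ℕ) : Set (Fin n → ℝ) :=
  convexHull ℝ (insert (0 : Fin n → ℝ)
    (insert ((d : ℝ) • (Pi.single (lastIdx n hn) 1 : Fin n → ℝ)) (smallBasis n)))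

/-- The simplex `Δ_i = conv{e_1, …, e_{n−1}, (i−1)·e_n, i·e_n}` in `ℝⁿ`. -/
def sliceSimplex (n : ℕ) (hn : 1 ≤ n) (i : ℕ) : Set (Fin n → ℝ) :=
  convexHull ℝ (insert (((i : ℝ) - 1) • (Pi.single (lastIdx n hn) 1 : Fin n → ℝ))
    (insert ((i : ℝ) • (Pi.single (lastIdx n hn) 1 : Fin n → ℝ)) (smallBasis n)))

open Set

theorem convexHull_insert_insert_eq_biUnion_segment {𝕜 E : Type*} [Field 𝕜] [LinearOrder 𝕜]
    [IsStrictOrderedRing 𝕜] [AddCommGroup E] [Module 𝕜 E] (a b : E) (s : Set E) :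
    convexHull 𝕜 (insert a (insert b s)) =
      ⋃ p ∈ segment 𝕜 a b, convexHull 𝕜 (insert p s) := by
  rcases s.eq_empty_or_nonempty with rfl | hs
  · simp [convexHull_pair]
  · have hab : insert a (insert b s) = {a, b} ∪ s := by rw [insert_union, singleton_union]
    rw [hab, convexHull_union (insert_nonempty _ _) hs, convexHull_pair]
    conv_lhs => rw [← biUnion_of_singleton (segment 𝕜 a b)]
    simp_rw [convexJoin_iUnion_left, convexHull_insert hs]

theorem Icc_zero_natCast_eq_biUnion_Icc {d : ℕ} (hd : 1 ≤ d) :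
    Icc (0 : ℝ) d = ⋃ i ∈ Icc 1 d, Icc ((i : ℝ) - 1) i := by
  ext t
  simp only [mem_Icc, mem_iUnion, exists_prop]
  constructor
  · rintro ⟨ht0, htd⟩
    refine ⟨max 1 ⌈t⌉₊, ⟨le_max_left _ _, max_le hd (Nat.ceil_le.mpr htd)⟩, ?_, ?_⟩
    · rcases le_total ⌈t⌉₊ 1 with h | h
      · simpa [max_eq_left h] using ht0
      · rw [max_eq_right h]
        linarith [Nat.ceil_lt_add_one ht0]
    · exact (Nat.le_ceil t).trans (by exact_mod_cast le_max_right 1 ⌈t⌉₊)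
  · rintro ⟨i, ⟨hi1, hid⟩, hit, hti⟩
    have hi1' : (1 : ℝ) ≤ i := by exact_mod_cast hi1
    exact ⟨by linarith, hti.trans (by exact_mod_cast hid)⟩

theorem segment_zero_natCast_smul_eq_biUnion {E : Type*} [AddCommGroup E] [Module ℝ E]
    (v : E) {d : ℕ} (hd : 1 ≤ d) :
    segment ℝ 0 ((d : ℝ) • v) = ⋃ i ∈ Icc 1 d, segment ℝ (((i : ℝ) - 1) • v) ((i : ℝ) • v) := by
  let f : ℝ →ᵃ[ℝ] E := (LinearMap.toSpanSingleton ℝ E v).toAffineMap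
  have hf (a b : ℝ) : segment ℝ (a • v) (b • v) = f '' segment ℝ a b :=
    (image_segment ℝ f a b).symm
  rw [← zero_smul ℝ v, hf, segment_eq_Icc (Nat.cast_nonneg d),
    Icc_zero_natCast_eq_biUnion_Icc hd, image_iUnion₂]
  refine iUnion₂_congr fun i _ => ?_
  rw [hf, segment_eq_Icc (by linarith)]

/-- `Δ = conv{0, e_1, …, e_{n−1}, d·e_n}` is the union of the `d`
simplices `Δ_i = conv{e_1, …, e_{n−1}, (i−1)·e_n, i·e_n}`, `i = 1, …, d`. -/
theorem stmt8 (n d : ℕ) (hn : 1 ≤ n) (hd : 1 ≤ d) :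
    bigSimplex n hn d = ⋃ i ∈ Set.Icc 1 d, sliceSimplex n hn i := by
  set e : Fin n → ℝ := Pi.single (lastIdx n hn) 1
  have hΔ : bigSimplex n hn d =
      ⋃ p ∈ segment ℝ 0 ((d : ℝ) • e), convexHull ℝ (insert p (smallBasis n)) :=
    convexHull_insert_insert_eq_biUnion_segment _ _ _
  have hΔi (i : ℕ) : sliceSimplex n hn i =
      ⋃ p ∈ segment ℝ (((i : ℝ) - 1) • e) ((i : ℝ) • e), convexHull ℝ (insert p (smallBasis n)) :=
    convexHull_insert_insert_eq_biUnion_segment _ _ _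
  simp_rw [hΔ, hΔi, segment_zero_natCast_smul_eq_biUnion e hd, biUnion_iUnion]
end

section
/- Let n, r ≥ 1, let β_1, …, β_r ∈ ℝ^n, and let a_1, …, a_r > 0 be positive real weights. Assume the convex hull conv{β_1, …, β_r} has nonempty interior in ℝ^n. Define μ : ℝ^n → ℝ^n by μ(t) = (∑_{j=1}^r a_j e^{⟨β_j, t⟩} β_j) / (∑_{j=1}^r a_j e^{⟨β_j, t⟩}), where ⟨·,·⟩ is the standard inner product on ℝ^n. Then the range of μ is exactly the interior of conv{β_1, …, β_r}. -/
/-!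
The moment map `μ(t)` is a convex combination of the `β j` with strictly positive weights, and
such a combination lies in the interior of the hull once that interior is nonempty. Conversely,
`μ` is the gradient of the convex potential `φ t = log ∑ j, a j * exp ⟪β j, t⟫`. If `y` is an
interior point, a ball around `y` lies in the hull, so `max_j ⟪β j, t⟫ ≥ ⟪y, t⟫ + ε ‖t‖` and
`φ t - ⟪y, t⟫` tends to `+∞` at infinity; at a minimiser `t₀` its gradient `μ t₀ - y` vanishes.
-/

open Finset Real Set Filter Topology

section ConvexHull

variable {κ E : Type*} [Fintype κ] [AddCommGroup E] [Module ℝ E]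

theorem convexHull_range_eq_image_stdSimplex (β : κ → E) :
    convexHull ℝ (range β) = (fun w => ∑ j, w j • β j) '' stdSimplex ℝ κ := by
  classical
  have hβ : range β = Fintype.linearCombination ℝ β '' range fun j => Pi.single j 1 := by
    rw [← range_comp]
    simp [Function.comp_def]
  rw [← convexHull_rangle_single_eq_stdSimplex, hβ, ← LinearMap.image_convexHull]
  ext
  simp [Fintype.linearCombination_apply]

variable [TopologicalSpace E] [IsTopologicalAddGroup E] [ContinuousConstSMul ℝ E]

theorem sum_smul_mem_interior_convexHull {β : κ → E}
    (hint : (interior (convexHull ℝ (range β))).Nonempty) {w : κ → ℝ} (hw : ∀ j, 0 < w j)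
    (hw₁ : ∑ j, w j = 1) : ∑ j, w j • β j ∈ interior (convexHull ℝ (range β)) := by
  obtain ⟨_, hz⟩ := hint
  obtain ⟨d, ⟨-, hd₁⟩, rfl⟩ := convexHull_range_eq_image_stdSimplex β ▸ interior_subset hz
  -- `p = ∑ w j • β j` lies between the interior point `z = ∑ d j • β j` and `p + ε • (p - z)`,
  -- which is still in the hull for small `ε > 0` because every `w j` is positive.
  have hsmall : ∀ᶠ ε in 𝓝[>] (0 : ℝ), ∀ j, 0 < w j + ε * (w j - d j) :=
    nhdsWithin_le_nhds <| eventually_all.2 fun j =>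
      (Continuous.tendsto (by fun_prop) 0).eventually (lt_mem_nhds (by simpa using hw j))
  obtain ⟨ε, hpos, hε⟩ := (hsmall.and self_mem_nhdsWithin).exists
  have hq : ∑ j, (w j + ε * (w j - d j)) • β j ∈ convexHull ℝ (range β) :=
    mem_convexHull_of_exists_fintype _ _ (fun j => (hpos j).le)
      (by simp [sum_add_distrib, ← mul_sum, sum_sub_distrib, hw₁, hd₁]) mem_range_self rfl
  have hcombo : ∑ j, w j • β j =
      (1 + ε)⁻¹ • ∑ j, (w j + ε * (w j - d j)) • β j + (ε / (1 + ε)) • ∑ j, d j • β j := by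
    simp only [smul_sum, smul_smul, ← sum_add_distrib, ← add_smul]
    refine sum_congr rfl fun j _ => congrArg (· • β j) ?_
    field_simp
    ring
  rw [hcombo]
  exact (convex_convexHull ℝ _).combo_self_interior_mem_interior hq hz (by positivity)
    (by positivity) (by field_simp)

end ConvexHull

section DotProduct

variable {κ ι : Type*} [Fintype ι]

theorem exists_dotProduct_le_of_mem_convexHull {β : κ → ι → ℝ} {x : ι → ℝ}
    (hx : x ∈ convexHull ℝ (range β)) (t : ι → ℝ) : ∃ j, x ⬝ᵥ t ≤ β j ⬝ᵥ t := by
  obtain ⟨_, ⟨j, rfl⟩, hj⟩ :=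
    (((dotProductBilin ℝ ℝ).flip t).convexOn convex_univ).exists_ge_of_mem_convexHull
      (subset_univ _) hx
  exact ⟨j, hj⟩

theorem norm_sign_le_one (t : ι → ℝ) : ‖fun i => (SignType.sign (t i) : ℝ)‖ ≤ 1 :=
  (pi_norm_le_iff_of_nonneg zero_le_one).2 fun i => by
    cases SignType.sign (t i) <;> simp

theorem norm_le_sign_dotProduct (t : ι → ℝ) :
    ‖t‖ ≤ (fun i => (SignType.sign (t i) : ℝ)) ⬝ᵥ t := by
  simp only [dotProduct, sign_mul_self]
  exact (pi_norm_le_iff_of_nonneg (by positivity)).2 fun i =>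
    single_le_sum (fun i _ => abs_nonneg (t i)) (mem_univ i)

theorem exists_dotProduct_add_norm_le {β : κ → ι → ℝ} {y : ι → ℝ}
    (hy : y ∈ interior (convexHull ℝ (range β))) :
    ∃ ε > 0, ∀ t, ∃ j, y ⬝ᵥ t + ε * ‖t‖ ≤ β j ⬝ᵥ t := by
  obtain ⟨ε, hε, hball⟩ :=
    Metric.nhds_basis_closedBall.mem_iff.1 (mem_interior_iff_mem_nhds.1 hy)
  refine ⟨ε, hε, fun t => ?_⟩
  set σ : ι → ℝ := fun i => SignType.sign (t i)
  have hmem : y + ε • σ ∈ convexHull ℝ (range β) := hball <| by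
    rw [Metric.mem_closedBall, dist_eq_norm, add_sub_cancel_left, norm_smul,
      Real.norm_of_nonneg hε.le]
    exact mul_le_of_le_one_right hε.le (norm_sign_le_one t)
  obtain ⟨j, hj⟩ := exists_dotProduct_le_of_mem_convexHull hmem t
  refine ⟨j, le_trans ?_ hj⟩
  rw [add_dotProduct, smul_dotProduct, smul_eq_mul]
  gcongr
  exact norm_le_sign_dotProduct t

end DotProduct

section MomentMap

variable {κ ι : Type*} [Fintype κ] [Fintype ι]

noncomputable def partitionFn (a : κ → ℝ) (β : κ → ι → ℝ) (t : ι → ℝ) : ℝ :=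
  ∑ j, a j * exp (β j ⬝ᵥ t)

noncomputable def momentMap (a : κ → ℝ) (β : κ → ι → ℝ) (t : ι → ℝ) : ι → ℝ :=
  (partitionFn a β t)⁻¹ • ∑ j, (a j * exp (β j ⬝ᵥ t)) • β j

variable {a : κ → ℝ} {β : κ → ι → ℝ}

theorem partitionFn_pos [Nonempty κ] (ha : ∀ j, 0 < a j) (t : ι → ℝ) :
    0 < partitionFn a β t :=
  sum_pos (fun j _ => mul_pos (ha j) (exp_pos _)) univ_nonempty

theorem continuous_partitionFn : Continuous (partitionFn a β) := by
  unfold partitionFn dotProduct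
  fun_prop

theorem log_add_dotProduct_le_log_partitionFn (ha : ∀ j, 0 < a j) (j : κ) (t : ι → ℝ) :
    log (a j) + β j ⬝ᵥ t ≤ log (partitionFn a β t) := by
  rw [← log_exp (β j ⬝ᵥ t), ← log_mul (ha j).ne' (exp_pos _).ne']
  exact log_le_log (by have := ha j; positivity)
    (single_le_sum (f := fun k => a k * exp (β k ⬝ᵥ t))
      (fun k _ => (mul_pos (ha k) (exp_pos _)).le) (mem_univ j))

theorem momentMap_mem_interior_convexHull (ha : ∀ j, 0 < a j)
    (hint : (interior (convexHull ℝ (range β))).Nonempty) (t : ι → ℝ) :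
    momentMap a β t ∈ interior (convexHull ℝ (range β)) := by
  have : Nonempty κ :=
    range_nonempty_iff_nonempty.1 (convexHull_nonempty_iff.1 (hint.mono interior_subset))
  have hZ := partitionFn_pos (β := β) ha t
  rw [momentMap, smul_sum]
  simp_rw [smul_smul]
  refine sum_smul_mem_interior_convexHull hint (fun j => by have := ha j; positivity) ?_
  rw [← mul_sum]
  exact inv_mul_cancel₀ hZ.ne'

theorem tendsto_log_partitionFn_sub_dotProduct (ha : ∀ j, 0 < a j) {y : ι → ℝ}
    (hy : y ∈ interior (convexHull ℝ (range β))) :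
    Tendsto (fun t => log (partitionFn a β t) - y ⬝ᵥ t) (cocompact _) atTop := by
  obtain ⟨ε, hε, hβ⟩ := exists_dotProduct_add_norm_le hy
  obtain ⟨C, hC⟩ := (finite_range fun j => log (a j)).bddBelow
  refine tendsto_atTop_mono (fun t => ?_)
    (tendsto_atTop_add_const_left _ C (tendsto_norm_cocompact_atTop.const_mul_atTop hε))
  obtain ⟨j, hj⟩ := hβ t
  linarith [log_add_dotProduct_le_log_partitionFn (β := β) ha j t, hC ⟨j, rfl⟩]

theorem hasDerivAt_dotProduct_add_smul (w t v : ι → ℝ) (s : ℝ) :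
    HasDerivAt (fun s : ℝ => w ⬝ᵥ (t + s • v)) (w ⬝ᵥ v) s := by
  simp only [dotProduct_add, dotProduct_smul, smul_eq_mul]
  simpa using ((hasDerivAt_id s).mul_const (w ⬝ᵥ v)).const_add (w ⬝ᵥ t)

theorem hasDerivAt_log_partitionFn_add_smul [Nonempty κ] (ha : ∀ j, 0 < a j) (t v : ι → ℝ) :
    HasDerivAt (fun s : ℝ => log (partitionFn a β (t + s • v))) (momentMap a β t ⬝ᵥ v) 0 := by
  have hZ : HasDerivAt (fun s : ℝ => partitionFn a β (t + s • v))
      (∑ j, a j * exp (β j ⬝ᵥ t) * (β j ⬝ᵥ v)) 0 := by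
    refine HasDerivAt.fun_sum fun j _ => ?_
    simpa [mul_assoc] using ((hasDerivAt_dotProduct_add_smul (β j) t v 0).exp).const_mul (a j)
  convert hZ.log (by simpa using (partitionFn_pos ha t).ne') using 1
  simp [momentMap, smul_dotProduct, sum_dotProduct, div_eq_inv_mul, mul_sum]

theorem momentMap_eq_of_isMinOn [Nonempty κ] (ha : ∀ j, 0 < a j) {y t₀ : ι → ℝ}
    (hmin : IsMinOn (fun t => log (partitionFn a β t) - y ⬝ᵥ t) univ t₀) :
    momentMap a β t₀ = y := by
  have hcrit : ∀ v, (momentMap a β t₀ - y) ⬝ᵥ v = 0 := fun v => by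
    have hloc : IsLocalMin (fun s : ℝ =>
        log (partitionFn a β (t₀ + s • v)) - y ⬝ᵥ (t₀ + s • v)) 0 :=
      Eventually.of_forall fun s => by simpa using hmin (mem_univ (t₀ + s • v))
    rw [sub_dotProduct]
    exact hloc.hasDerivAt_eq_zero ((hasDerivAt_log_partitionFn_add_smul ha t₀ v).sub
      (hasDerivAt_dotProduct_add_smul y t₀ v 0))
  exact sub_eq_zero.1 (dotProduct_self_eq_zero.1 (hcrit _))

theorem exists_momentMap_eq (ha : ∀ j, 0 < a j) {y : ι → ℝ}
    (hy : y ∈ interior (convexHull ℝ (range β))) : ∃ t, momentMap a β t = y := by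
  have : Nonempty κ :=
    range_nonempty_iff_nonempty.1 (convexHull_nonempty_iff.1 ⟨y, interior_subset hy⟩)
  obtain ⟨t₀, ht₀⟩ := ((continuous_partitionFn.log fun t => (partitionFn_pos ha t).ne').sub
    (by fun_prop)).exists_forall_le (tendsto_log_partitionFn_sub_dotProduct ha hy)
  exact ⟨t₀, momentMap_eq_of_isMinOn ha (isMinOn_univ_iff.2 ht₀)⟩

theorem range_momentMap (ha : ∀ j, 0 < a j)
    (hint : (interior (convexHull ℝ (range β))).Nonempty) :
    range (momentMap a β) = interior (convexHull ℝ (range β)) :=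
  Subset.antisymm (range_subset_iff.2 (momentMap_mem_interior_convexHull ha hint))
    fun _ hy => exists_momentMap_eq ha hy

end MomentMap

theorem stmt14_general (n r : ℕ)
    (β : Fin r → (Fin n → ℝ)) (a : Fin r → ℝ) (ha : ∀ j, 0 < a j)
    (hint : (interior (convexHull ℝ (Set.range β))).Nonempty)
    (μ : (Fin n → ℝ) → (Fin n → ℝ))
    (hμ : ∀ t, μ t = (∑ j, a j * Real.exp (∑ i, β j i * t i))⁻¹ •
      (∑ j, (a j * Real.exp (∑ i, β j i * t i)) • β j)) :
    Set.range μ = interior (convexHull ℝ (Set.range β)) := by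
  obtain rfl : μ = momentMap a β := funext hμ
  exact range_momentMap ha hint

/-- Let `β_1, …, β_r ∈ ℝⁿ` and positive weights `a_1, …, a_r`,
with `conv{β_1, …, β_r}` having nonempty interior. The (logarithmic) moment map
`μ(t) = (∑_j a_j e^{⟨β_j,t⟩} β_j) / (∑_j a_j e^{⟨β_j,t⟩})` has range exactly the
interior of `conv{β_1, …, β_r}`. -/
theorem stmt14 (n r : ℕ) (hn : 1 ≤ n) (hr : 1 ≤ r)
    (β : Fin r → (Fin n → ℝ)) (a : Fin r → ℝ) (ha : ∀ j, 0 < a j)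
    (hint : (interior (convexHull ℝ (Set.range β))).Nonempty)
    (μ : (Fin n → ℝ) → (Fin n → ℝ))
    (hμ : ∀ t, μ t = (∑ j, a j * Real.exp (∑ i, β j i * t i))⁻¹ •
      (∑ j, (a j * Real.exp (∑ i, β j i * t i)) • β j)) :
    Set.range μ = interior (convexHull ℝ (Set.range β)) :=
  stmt14_general n r β a ha hint μ hμ
end
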